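/- Let c₄ ∈ (0,1), δ > 0, B > 0, h > 0. Then limsup_{ε→0} ∑_{i≥1} (1 − c₄)^{⌊h 2^{i−2}/(ε i (i+1))⌋} · ε^{−δ} 2^{iδ} = 0. -/

import Mathlib

open Filter Real
open scoped Topology

lemma aux_sq (i : ℕ) : ((i+1)*(i+2))^2 ≤ 256 * 2^i := by
  induction i with
  | zero => norm_num
  | succ n ih =>
    rcases lt_or_ge n 4 with h | h
    · interval_cases n <;> norm_num
    · have h2 : ((n+2)*(n+3))^2 ≤ 2 * ((n+1)*(n+2))^2 := by nlinarith
      calc ((n+1+1)*(n+1+2))^2 = ((n+2)*(n+3))^2 := by ring_nf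
        _ ≤ 2 * ((n+1)*(n+2))^2 := h2
        _ ≤ 2 * (256 * 2^n) := by omega
        _ = 256 * 2^(n+1) := by ring

lemma aux_sqrt (i : ℕ) : ((i:ℝ)+1)*((i:ℝ)+2) ≤ 16 * 2 ^ ((i:ℝ)/2) := by
  have h1 : (((i:ℝ)+1)*((i:ℝ)+2))^2 ≤ 256 * 2^i := by exact_mod_cast aux_sq i
  have h2 : (16 * (2:ℝ) ^ ((i:ℝ)/2))^2 = 256 * 2^i := by
    rw [mul_pow, ← Real.rpow_natCast ((2:ℝ) ^ ((i:ℝ)/2)) 2, ← Real.rpow_mul (by norm_num),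
      show (i:ℝ)/2*(2:ℕ) = ((i:ℕ):ℝ) by push_cast; ring, Real.rpow_natCast]
    norm_num
  have hpos : (0:ℝ) ≤ ((i:ℝ)+1)*((i:ℝ)+2) := by positivity
  have hpos2 : (0:ℝ) ≤ 16 * 2 ^ ((i:ℝ)/2) := by positivity
  nlinarith [h1, h2]

lemma key (q h δ ε : ℝ) (hq0 : 0 < q) (hq1 : q < 1) (hh : 0 < h) (hε : 0 < ε)
    (hδ : 0 < δ) (t : ℕ) (ht : δ + 1 ≤ (t:ℝ)) (i : ℕ) :
    q ^ ⌊h * 2 ^ (((i : ℝ) + 1) - 2) / (ε * ((i : ℝ) + 1) * ((i : ℝ) + 2))⌋₊ *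
      2 ^ (((i : ℝ) + 1) * δ)
    ≤ (q⁻¹ * (((2*t).factorial : ℝ) * 32^(2*t) / (h * (-Real.log q))^(2*t)) * 2 ^ δ)
        * ε^(2*t) * (1/2:ℝ)^i := by
  set L : ℝ := -Real.log q with hLdef
  have hL : 0 < L := by
    have := Real.log_neg hq0 hq1
    simp [hLdef]; linarith
  set x : ℝ := h * 2 ^ (((i : ℝ) + 1) - 2) / (ε * ((i : ℝ) + 1) * ((i : ℝ) + 2)) with hxdef
  have hx : 0 < x := by
    apply div_pos (by positivity)
    positivity
  -- Step A
  have stepA : q ^ ⌊x⌋₊ ≤ q⁻¹ * Real.exp (-(x * L)) := by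
    have h1 : (q:ℝ) ^ ⌊x⌋₊ = q ^ ((⌊x⌋₊ : ℝ)) := (Real.rpow_natCast q _).symm
    have h2 : x - 1 ≤ ((⌊x⌋₊ : ℝ)) := (Nat.sub_one_lt_floor x).le
    have h3 : q ^ ((⌊x⌋₊ : ℝ)) ≤ q ^ (x - 1) :=
      Real.rpow_le_rpow_of_exponent_ge hq0 hq1.le h2
    have h4 : q ^ (x - 1) = q⁻¹ * Real.exp (-(x * L)) := by
      rw [Real.rpow_sub hq0, Real.rpow_one, Real.rpow_def_of_pos hq0]
      rw [hLdef]
      ring_nf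
    rw [h1]; rw [h4] at h3; exact h3
  -- Step C: lower bound on x
  have hx_low : (h/32) * 2 ^ ((i:ℝ)/2) / ε ≤ x := by
    rw [hxdef]
    rw [div_le_div_iff₀ (by positivity) (by positivity)]
    have e1 : (2:ℝ) ^ (((i:ℝ)+1) - 2) = 2 ^ ((i:ℝ)/2) * 2 ^ ((i:ℝ)/2 - 1) := by
      rw [← Real.rpow_add (by norm_num)]; ring_nf
    rw [e1]
    have e2 : (2:ℝ) ^ ((i:ℝ)/2 - 1) = 2 ^ ((i:ℝ)/2) / 2 := by
      rw [Real.rpow_sub (by norm_num), Real.rpow_one]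
    calc h/32 * 2 ^ ((i:ℝ)/2) * (ε * ((i:ℝ)+1) * ((i:ℝ)+2))
        ≤ h/32 * 2 ^ ((i:ℝ)/2) * (ε * (16 * 2 ^ ((i:ℝ)/2))) := by
          have := aux_sqrt i
          have h5 : ε * (((i:ℝ)+1) * ((i:ℝ)+2)) ≤ ε * (16 * 2 ^ ((i:ℝ)/2)) :=
            mul_le_mul_of_nonneg_left this hε.le
          have hnn : (0:ℝ) ≤ h/32 * 2 ^ ((i:ℝ)/2) := by positivity
          calc h/32 * 2 ^ ((i:ℝ)/2) * (ε * ((i:ℝ)+1) * ((i:ℝ)+2))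
              = h/32 * 2 ^ ((i:ℝ)/2) * (ε * (((i:ℝ)+1) * ((i:ℝ)+2))) := by ring
            _ ≤ _ := mul_le_mul_of_nonneg_left h5 hnn
      _ = h * (2 ^ ((i:ℝ)/2) * (2 ^ ((i:ℝ)/2) / 2)) * ε := by ring
      _ = h * (2 ^ ((i:ℝ)/2) * 2 ^ ((i:ℝ)/2 - 1)) * ε := by rw [e2]
  -- Step B + C : exp bound
  have stepB : Real.exp (-(x * L)) ≤
      (((2*t).factorial : ℝ) * 32^(2*t) / (h*L)^(2*t)) * ε^(2*t) * (2:ℝ) ^ (-((t:ℝ) * i)) := by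
    have hxL : 0 < x * L := mul_pos hx hL
    have hb : (x*L)^(2*t) / ((2*t).factorial : ℝ) ≤ Real.exp (x*L) :=
      Real.pow_div_factorial_le_exp _ hxL.le (2*t)
    have hfac : (0:ℝ) < ((2*t).factorial : ℝ) := by exact_mod_cast Nat.factorial_pos (2*t)
    have hinv : Real.exp (-(x*L)) ≤ ((2*t).factorial : ℝ) / (x*L)^(2*t) := by
      rw [Real.exp_neg]
      have h0 : 0 < (x*L)^(2*t) / ((2*t).factorial:ℝ) := by positivity
      calc (Real.exp (x*L))⁻¹ ≤ ((x*L)^(2*t) / ((2*t).factorial:ℝ))⁻¹ :=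
            inv_anti₀ h0 hb
        _ = ((2*t).factorial:ℝ) / (x*L)^(2*t) := by rw [inv_div]
    -- lower bound (x*L)^(2*t)
    have hclow : 0 < (h/32) * 2 ^ ((i:ℝ)/2) / ε * L := by positivity
    have hxLlow : ((h/32) * 2 ^ ((i:ℝ)/2) / ε * L)^(2*t) ≤ (x*L)^(2*t) := by
      apply pow_le_pow_left₀ hclow.le
      exact mul_le_mul_of_nonneg_right hx_low hL.le
    have hfinal : ((2*t).factorial : ℝ) / (x*L)^(2*t) ≤ ((2*t).factorial : ℝ) / ((h/32) * 2 ^ ((i:ℝ)/2) / ε * L)^(2*t) := by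
      apply div_le_div_of_nonneg_left hfac.le (by positivity) hxLlow
    have heq : ((2*t).factorial : ℝ) / ((h/32) * 2 ^ ((i:ℝ)/2) / ε * L)^(2*t)
        = (((2*t).factorial : ℝ) * 32^(2*t) / (h*L)^(2*t)) * ε^(2*t) * (2:ℝ) ^ (-((t:ℝ) * i)) := by
      have hp : ((2:ℝ) ^ ((i:ℝ)/2))^(2*t) = (2:ℝ) ^ ((t:ℝ) * i) := by
        rw [← Real.rpow_natCast ((2:ℝ) ^ ((i:ℝ)/2)) (2*t), ← Real.rpow_mul (by norm_num)]
        congr 1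
        push_cast
        ring
      have e3 : ((h/32) * 2 ^ ((i:ℝ)/2) / ε * L)^(2*t)
          = (h*L)^(2*t) * (2:ℝ) ^ ((t:ℝ)*i) / (32^(2*t) * ε^(2*t)) := by
        rw [show h/32 * 2^((i:ℝ)/2) / ε * L = (h*L) * 2^((i:ℝ)/2) / (32*ε) by ring,
          div_pow, mul_pow, mul_pow, hp]
        ring
      rw [e3, Real.rpow_neg (by norm_num)]
      field_simp
    calc Real.exp (-(x*L)) ≤ ((2*t).factorial : ℝ) / (x*L)^(2*t) := hinv
      _ ≤ _ := hfinal
      _ = _ := heq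
  -- combine
  have hpow2 : (2:ℝ) ^ (-((t:ℝ) * i)) * 2 ^ (((i:ℝ)+1)*δ) ≤ 2 ^ δ * (1/2:ℝ)^i := by
    rw [← Real.rpow_add (by norm_num)]
    have e4 : (2:ℝ) ^ δ * (1/2:ℝ)^i = 2 ^ (δ + (-(i:ℝ))) := by
      rw [Real.rpow_add (by norm_num), Real.rpow_neg (by norm_num), Real.rpow_natCast,
        one_div, inv_pow]
    rw [e4]
    apply Real.rpow_le_rpow_of_exponent_le (by norm_num)
    have : (i:ℝ) * (δ - (t:ℝ)) ≤ (i:ℝ) * (-1) := by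
      apply mul_le_mul_of_nonneg_left _ (Nat.cast_nonneg i)
      linarith
    nlinarith [Nat.cast_nonneg (α := ℝ) i]
  calc q ^ ⌊x⌋₊ * 2 ^ (((i:ℝ)+1)*δ)
      ≤ (q⁻¹ * Real.exp (-(x*L))) * 2 ^ (((i:ℝ)+1)*δ) := by
        apply mul_le_mul_of_nonneg_right stepA (by positivity)
    _ ≤ (q⁻¹ * ((((2*t).factorial : ℝ) * 32^(2*t) / (h*L)^(2*t)) * ε^(2*t) * (2:ℝ) ^ (-((t:ℝ)*i)))) *
          2 ^ (((i:ℝ)+1)*δ) := by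
        apply mul_le_mul_of_nonneg_right _ (by positivity)
        exact mul_le_mul_of_nonneg_left stepB (by positivity)
    _ = (q⁻¹ * (((2*t).factorial : ℝ) * 32^(2*t) / (h*L)^(2*t)) * ε^(2*t)) *
          ((2:ℝ) ^ (-((t:ℝ)*i)) * 2 ^ (((i:ℝ)+1)*δ)) := by ring
    _ ≤ (q⁻¹ * (((2*t).factorial : ℝ) * 32^(2*t) / (h*L)^(2*t)) * ε^(2*t)) * (2 ^ δ * (1/2:ℝ)^i) := by
        apply mul_le_mul_of_nonneg_left hpow2 (by positivity)
    _ = (q⁻¹ * (((2*t).factorial : ℝ) * 32^(2*t) / (h * L)^(2*t)) * 2 ^ δ) * ε^(2*t) * (1/2:ℝ)^i := by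
        ring
/-- For any constants B, c₄, δ, h > 0 with c₄ < 1,
ε^{−δ} ∑_{i≥1} (1 − c₄)^{⌊h 2^{i−2}/(ε i(i+1))⌋} 2^{iδ} → 0 as ε → 0⁺. -/
theorem stmt_16 (B c₄ δ h : ℝ) (hB : 0 < B) (hc₄ : 0 < c₄) (hc₄' : c₄ < 1)
    (hδ : 0 < δ) (hh : 0 < h) :
    Tendsto (fun ε : ℝ =>
        ε ^ (-δ) * ∑' i : ℕ,
          (1 - c₄) ^ ⌊h * 2 ^ (((i : ℝ) + 1) - 2) / (ε * ((i : ℝ) + 1) * ((i : ℝ) + 2))⌋₊ *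
            2 ^ (((i : ℝ) + 1) * δ))
      (nhdsWithin 0 (Set.Ioi 0)) (nhds 0) := by
  have hq0 : 0 < 1 - c₄ := by linarith
  have hq1 : 1 - c₄ < 1 := by linarith
  have hL : 0 < -Real.log (1 - c₄) := by
    have := Real.log_neg hq0 hq1
    linarith
  set t : ℕ := ⌈δ⌉₊ + 1 with htdef
  have ht : δ + 1 ≤ (t:ℝ) := by
    have h1 := Nat.le_ceil δ
    have h2 : ((⌈δ⌉₊ + 1 : ℕ) : ℝ) = (⌈δ⌉₊ : ℝ) + 1 := by push_cast; ring
    rw [htdef, h2]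
    linarith
  set K : ℝ := (1 - c₄)⁻¹ * (((2*t).factorial : ℝ) * 32^(2*t) / (h * (-Real.log (1 - c₄)))^(2*t))
      * 2 ^ δ with hKdef
  have hK : 0 < K := by
    have hfac : (0:ℝ) < ((2*t).factorial : ℝ) := by exact_mod_cast Nat.factorial_pos (2*t)
    positivity
  have hA : (0:ℝ) < 2*(t:ℝ) - δ := by linarith
  -- upper comparison function
  have hup : Tendsto (fun ε : ℝ => 2*K * ε ^ (2*(t:ℝ) - δ)) (𝓝[>] 0) (𝓝 0) := by
    have h2 : Tendsto (fun ε : ℝ => Real.exp (Real.log ε * (2*(t:ℝ) - δ))) (𝓝[>] 0) (𝓝 0) :=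
      Real.tendsto_exp_atBot.comp (Real.tendsto_log_nhdsGT_zero.atBot_mul_const' hA)
    have h1 : Tendsto (fun ε : ℝ => ε ^ (2*(t:ℝ) - δ)) (𝓝[>] 0) (𝓝 0) := by
      apply h2.congr'
      filter_upwards [self_mem_nhdsWithin] with ε (hε : ε ∈ Set.Ioi 0)
      rw [Real.rpow_def_of_pos hε]
    have := h1.const_mul (2*K)
    simpa using this
  apply tendsto_of_tendsto_of_tendsto_of_le_of_le' (tendsto_const_nhds : Tendsto (fun _ : ℝ => (0:ℝ)) (𝓝[>] 0) (𝓝 0)) hup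
  · -- lower bound
    filter_upwards [self_mem_nhdsWithin] with ε (hε : ε ∈ Set.Ioi 0)
    have hε' : (0:ℝ) < ε := hε
    apply mul_nonneg (Real.rpow_nonneg hε'.le _)
    apply tsum_nonneg
    intro i
    exact mul_nonneg (pow_nonneg hq0.le _) (Real.rpow_nonneg (by norm_num) _)
  · -- upper bound
    filter_upwards [self_mem_nhdsWithin] with ε (hε : ε ∈ Set.Ioi 0)
    have hε' : (0:ℝ) < ε := hε
    have hterm : ∀ i : ℕ,
        (1 - c₄) ^ ⌊h * 2 ^ (((i : ℝ) + 1) - 2) / (ε * ((i : ℝ) + 1) * ((i : ℝ) + 2))⌋₊ *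
          2 ^ (((i : ℝ) + 1) * δ) ≤ (K * ε^(2*t)) * (1/2:ℝ)^i := by
      intro i
      have := key (1 - c₄) h δ ε hq0 hq1 hh hε' hδ t ht i
      calc _ ≤ _ := this
        _ = (K * ε^(2*t)) * (1/2:ℝ)^i := by rw [hKdef]
    have hsumv : Summable (fun i : ℕ => (K * ε^(2*t)) * (1/2:ℝ)^i) :=
      (summable_geometric_of_lt_one (by norm_num) (by norm_num)).mul_left _
    have hsumu : Summable (fun i : ℕ =>
        (1 - c₄) ^ ⌊h * 2 ^ (((i : ℝ) + 1) - 2) / (ε * ((i : ℝ) + 1) * ((i : ℝ) + 2))⌋₊ *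
          2 ^ (((i : ℝ) + 1) * δ)) := by
      apply Summable.of_nonneg_of_le _ hterm hsumv
      intro i
      exact mul_nonneg (pow_nonneg hq0.le _) (Real.rpow_nonneg (by norm_num) _)
    have htsum := Summable.tsum_le_tsum hterm hsumu hsumv
    have hgeo : ∑' i : ℕ, (K * ε^(2*t)) * (1/2:ℝ)^i = (K * ε^(2*t)) * 2 := by
      rw [tsum_mul_left, tsum_geometric_of_lt_one (by norm_num) (by norm_num)]
      norm_num
    calc ε ^ (-δ) * ∑' i : ℕ,
          (1 - c₄) ^ ⌊h * 2 ^ (((i : ℝ) + 1) - 2) / (ε * ((i : ℝ) + 1) * ((i : ℝ) + 2))⌋₊ *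
            2 ^ (((i : ℝ) + 1) * δ)
        ≤ ε ^ (-δ) * ((K * ε^(2*t)) * 2) := by
          apply mul_le_mul_of_nonneg_left _ (Real.rpow_nonneg hε'.le _)
          rw [← hgeo]; exact htsum
      _ = 2*K * ε ^ (2*(t:ℝ) - δ) := by
          rw [show (2*(t:ℝ) - δ) = -δ + ((2*t : ℕ) : ℝ) by push_cast; ring,
            Real.rpow_add hε', Real.rpow_natCast]
          ring
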